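/- arXiv:2511.22152 — 3 statements merged into one kernel-verified Lean document; each statement's English description precedes it below -/
import Mathlib

section
/- For fixed z, the Bayes factor BF(z,k) = sqrt(1+k) * exp(-z²k/(2(1+k))) tends to infinity as k → ∞. -/
noncomputable def BF (z k : ℝ) : ℝ := Real.sqrt (1 + k) * Real.exp (-(z^2 * k) / (2 * (1 + k)))

open Filter Topology Real

/- The prior-width factor `√(1 + k)` grows without bound, while the likelihood factor only
converges to the positive constant `exp (-z² / 2)`, so their product diverges. -/

lemma tendsto_div_const_add_atTop (a : ℝ) :
    Tendsto (fun x : ℝ => x / (a + x)) atTop (𝓝 1) := by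
  have h : Tendsto (fun x : ℝ => (1 + a * x⁻¹)⁻¹) atTop (𝓝 1) := by
    simpa using ((tendsto_inv_atTop_zero.const_mul a).const_add 1).inv₀ (by simp)
  refine h.congr' ?_
  filter_upwards [eventually_gt_atTop 0] with x hx
  field_simp
  ring

lemma BF_exponent_eq (z k : ℝ) :
    -(z ^ 2 * k) / (2 * (1 + k)) = -(z ^ 2) / 2 * (k / (1 + k)) := by
  rw [neg_mul_eq_neg_mul, mul_div_mul_comm]

theorem bf_tendsto_atTop (z : ℝ) :
    Filter.Tendsto (fun k => BF z k) Filter.atTop Filter.atTop := by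
  have hroot : Tendsto (fun k : ℝ => √(1 + k)) atTop atTop :=
    tendsto_sqrt_atTop.comp (tendsto_atTop_add_const_left _ 1 tendsto_id)
  have hexp : Tendsto (fun k : ℝ => exp (-(z ^ 2 * k) / (2 * (1 + k)))) atTop
      (𝓝 (exp (-(z ^ 2) / 2))) := by
    simp only [BF_exponent_eq]
    simpa using ((tendsto_div_const_add_atTop 1).const_mul (-(z ^ 2) / 2)).rexp
  exact hroot.atTop_mul_pos (exp_pos _) hexp
end

section
/- For fixed z with |z| > 1, the function k ↦ BF(z,k) = sqrt(1+k)*exp(-z²k/(2(1+k))) attains a unique global minimum on [0,∞) at k = z² - 1, and the minimum value is strictly less than 1. -/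
open Real

lemma log_add_one_lt_log_add_div {a t : ℝ} (ha : 0 < a) (ht : 0 < t) (hne : t ≠ a) :
    log a + 1 < log t + a / t := by
  have h := log_lt_sub_one_of_pos (div_pos ha ht) fun h ↦ hne ((div_eq_one_iff_eq ht.ne').mp h).symm
  rw [log_div ha.ne' ht.ne'] at h
  linarith

lemma BF_eq_exp (z : ℝ) {k : ℝ} (hk : 0 < 1 + k) :
    BF z k = exp ((log (1 + k) + z ^ 2 / (1 + k) - z ^ 2) / 2) := by
  rw [BF, sqrt_eq_rpow, rpow_def_of_pos hk, ← exp_add]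
  congr 1
  field_simp
  ring

lemma BF_sq_sub_one {z : ℝ} (hz : z ≠ 0) :
    BF z (z ^ 2 - 1) = exp ((log (z ^ 2) + 1 - z ^ 2) / 2) := by
  rw [BF_eq_exp z (by rw [add_sub_cancel]; positivity), add_sub_cancel,
    div_self (pow_ne_zero 2 hz)]

theorem bf_unique_global_min (z : ℝ) (hz : 1 < |z|) :
    (∀ k : ℝ, 0 ≤ k → k ≠ z^2 - 1 → BF z (z^2 - 1) < BF z k) ∧
    BF z (z^2 - 1) < 1 := by
  have ha : 1 < z ^ 2 := by simpa using (one_lt_sq_iff_one_lt_abs z).mpr hz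
  have hz0 : z ≠ 0 := abs_pos.mp (by linarith)
  refine ⟨fun k hk hne ↦ ?_, ?_⟩
  · rw [BF_sq_sub_one hz0, BF_eq_exp z (by linarith), exp_lt_exp]
    have := log_add_one_lt_log_add_div (by linarith : 0 < z ^ 2) (by linarith : 0 < 1 + k)
      fun h ↦ hne (by linarith)
    linarith
  · rw [BF_sq_sub_one hz0, exp_lt_one_iff]
    have := log_lt_sub_one_of_pos (by linarith : 0 < z ^ 2) ha.ne'
    linarith
end

section
/- For any real z with z² > 1, there exists a unique k* > 0 such that (1+k*)·ln(1+k*) = z²·k*. -/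
open Real Set

/-! The defect `(1 + k) log (1 + k) - c k` is `u log u` at `u = 1 + k` minus a linear function,
hence strictly convex; since it vanishes at `k = 0`, it has at most one positive zero. For `c > 1`
it is negative at `k = c - 1` (as `log c < c - 1`) and positive at `k = exp c - 1`, so the
intermediate value theorem provides that zero. -/

theorem StrictConvexOn.eq_of_apply_eq_of_lt {s : Set ℝ} {f : ℝ → ℝ} (hf : StrictConvexOn ℝ s f)
    {a x y : ℝ} (ha : a ∈ s) (hx : x ∈ s) (hy : y ∈ s) (hax : a < x) (hay : a < y)
    (hfx : f x = f a) (hfy : f y = f a) : x = y := by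
  have false_of_lt : ∀ {x y}, y ∈ s → a < x → x < y → f x = f a → f y = f a → False :=
    fun hy hax hxy hfx hfy => by
      have := hf.lt_on_openSegment ha hy (hax.trans hxy).ne (Ioo_subset_openSegment ⟨hax, hxy⟩)
      rw [hfx, hfy, max_self] at this
      exact this.false
  rcases lt_trichotomy x y with hxy | hxy | hxy
  · exact (false_of_lt hy hax hxy hfx hfy).elim
  · exact hxy
  · exact (false_of_lt hx hay hxy hfy hfx).elim

noncomputable def flipDefect (c k : ℝ) : ℝ := (1 + k) * log (1 + k) - c * k

theorem strictConvexOn_flipDefect (c : ℝ) : StrictConvexOn ℝ (Ici (-1)) (flipDefect c) := by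
  have h := strictConvexOn_mul_log.translate_right 1
  have hs : (fun k : ℝ => 1 + k) ⁻¹' Ici 0 = Ici (-1) := by ext k; simp [neg_le_iff_add_nonneg']
  rw [hs] at h
  exact h.sub_concaveOn ((LinearMap.mulLeft ℝ c).concaveOn (convex_Ici _))

theorem continuous_flipDefect (c : ℝ) : Continuous (flipDefect c) :=
  (continuous_mul_log.comp (continuous_const_add 1)).sub (continuous_const_mul c)

theorem flipDefect_eq_zero_iff {c k : ℝ} : flipDefect c k = 0 ↔ (1 + k) * log (1 + k) = c * k :=
  sub_eq_zero

@[simp] theorem flipDefect_zero (c : ℝ) : flipDefect c 0 = 0 := by simp [flipDefect]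

theorem flipDefect_sub_one_neg {c : ℝ} (hc : 1 < c) : flipDefect c (c - 1) < 0 := by
  have hlog : log c < c - 1 := log_lt_sub_one_of_pos (by linarith) hc.ne'
  have : c * log c < c * (c - 1) := mul_lt_mul_of_pos_left hlog (by linarith)
  simp only [flipDefect, add_sub_cancel]
  linarith

theorem flipDefect_exp_sub_one_pos {c : ℝ} (hc : 0 < c) : 0 < flipDefect c (exp c - 1) := by
  simp only [flipDefect, add_sub_cancel, log_exp]
  linarith

theorem exists_pos_flipDefect_eq_zero {c : ℝ} (hc : 1 < c) : ∃ k, 0 < k ∧ flipDefect c k = 0 := by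
  have hle : c - 1 ≤ exp c - 1 := by linarith [add_one_le_exp c]
  obtain ⟨k, hk, hk0⟩ := intermediate_value_Icc hle (continuous_flipDefect c).continuousOn
    ⟨(flipDefect_sub_one_neg hc).le, (flipDefect_exp_sub_one_pos (by linarith)).le⟩
  exact ⟨k, by linarith [hk.1], hk0⟩

theorem flip_point_exists_unique (z : ℝ) (hz : 1 < z^2) :
    ∃! k : ℝ, 0 < k ∧ (1 + k) * Real.log (1 + k) = z^2 * k := by
  obtain ⟨k, hk, hk0⟩ := exists_pos_flipDefect_eq_zero hz
  refine ⟨k, ⟨hk, flipDefect_eq_zero_iff.1 hk0⟩, fun x ⟨hx, hx0⟩ => ?_⟩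
  have mem_Ici_of_pos : ∀ {t : ℝ}, 0 < t → t ∈ Ici (-1) := fun ht => mem_Ici.2 (by linarith)
  exact (strictConvexOn_flipDefect _).eq_of_apply_eq_of_lt (a := 0) (by simp)
    (mem_Ici_of_pos hx) (mem_Ici_of_pos hk) hx hk
    (by simpa using flipDefect_eq_zero_iff.2 hx0) (by simpa using hk0)
end
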